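/- arXiv:2407.02294 — 2 statements merged into one kernel-verified Lean document; each statement's English description precedes it below -/
import Mathlib

section
/- Let $\Lambda_1, \Lambda_2, \overline{\Lambda}$ be rings with surjective ring homomorphisms $g_1 : \Lambda_1 \to \overline{\Lambda}$ and $g_2 : \Lambda_2 \to \overline{\Lambda}$, and let $\Lambda = \{(x_1, x_2) \in \Lambda_1 \oplus \Lambda_2 \mid g_1(x_1) = g_2(x_2)\}$ be the fibre product. For a unit $u \in \overline{\Lambda}^\times$, define the left $\Lambda$-module $M(u) = \{(x_1, x_2) \in \Lambda_1 \oplus \Lambda_2 \mid g_1(x_1)u = g_2(x_2)\}$. Then $M(u) \cong \Lambda$ as left $\Lambda$-modules if and only if $u = g_1(w_1) g_2(w_2)$ for some units $w_1 \in \Lambda_1^\times$, $w_2 \in \Lambda_2^\times$. -/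
variable {Λ₁ Λ₂ L : Type*} [Ring Λ₁] [Ring Λ₂] [Ring L]

/-- The fibre product `Λ = {(x₁, x₂) ∈ Λ₁ ⊕ Λ₂ ∣ g₁ x₁ = g₂ x₂}`,
as a subring of `Λ₁ × Λ₂`. -/
def fibreProduct (g₁ : Λ₁ →+* L) (g₂ : Λ₂ →+* L) : Subring (Λ₁ × Λ₂) :=
  RingHom.eqLocus (g₁.comp (RingHom.fst Λ₁ Λ₂)) (g₂.comp (RingHom.snd Λ₁ Λ₂))

/-- The Reiner–Ullom pullback lattice
`M(u) = {(x₁, x₂) ∈ Λ₁ ⊕ Λ₂ ∣ g₁ x₁ · u = g₂ x₂}`, as a left module over the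
fibre product `Λ` (acting by componentwise left multiplication). -/
def pullbackLattice (g₁ : Λ₁ →+* L) (g₂ : Λ₂ →+* L) (u : Lˣ) :
    Submodule (fibreProduct g₁ g₂) (Λ₁ × Λ₂) where
  carrier := {x | g₁ x.1 * u = g₂ x.2}
  add_mem' := by
    intro a b ha hb
    simp only [Set.mem_setOf_eq, Prod.fst_add, Prod.snd_add, map_add, add_mul] at *
    rw [ha, hb]
  zero_mem' := by simp
  smul_mem' := by
    rintro ⟨⟨l₁, l₂⟩, hl⟩ ⟨x₁, x₂⟩ hx
    have hl' : g₁ l₁ = g₂ l₂ := hl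
    simp only [Set.mem_setOf_eq] at hx ⊢
    show g₁ (l₁ * x₁) * u = g₂ (l₂ * x₂)
    rw [map_mul, map_mul, mul_assoc, hx, hl']

set_option maxHeartbeats 1000000
set_option synthInstance.maxHeartbeats 400000

/-- With `g₁ : Λ₁ → L̄`, `g₂ : Λ₂ → L̄` surjective ring homomorphisms,
`Λ` the fibre product and `M(u)` the pullback lattice attached to a unit `u ∈ L̄ˣ`:
`M(u) ≅ Λ` as left `Λ`-modules if and only if `u = g₁ w₁ · g₂ w₂` for some units
`w₁ ∈ Λ₁ˣ`, `w₂ ∈ Λ₂ˣ`. -/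
theorem pullbackLattice_iso_iff_unit_factors
    (g₁ : Λ₁ →+* L) (g₂ : Λ₂ →+* L)
    (hg₁ : Function.Surjective g₁) (hg₂ : Function.Surjective g₂) (u : Lˣ) :
    Nonempty
        (↥(fibreProduct g₁ g₂) ≃ₗ[↥(fibreProduct g₁ g₂)] ↥(pullbackLattice g₁ g₂ u)) ↔
      ∃ (w₁ : Λ₁ˣ) (w₂ : Λ₂ˣ), g₁ w₁ * g₂ w₂ = (u : L) := by
  constructor
  · rintro ⟨φ⟩
    set a₁ : Λ₁ := ((φ 1 : ↥(pullbackLattice g₁ g₂ u)) : Λ₁ × Λ₂).1 with ha₁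
    set a₂ : Λ₂ := ((φ 1 : ↥(pullbackLattice g₁ g₂ u)) : Λ₁ × Λ₂).2 with ha₂
    have he : g₁ a₁ * u = g₂ a₂ := (φ 1).2
    have hφ : ∀ l : ↥(fibreProduct g₁ g₂),
        ((φ l : ↥(pullbackLattice g₁ g₂ u)) : Λ₁ × Λ₂) = (l.val.1 * a₁, l.val.2 * a₂) := by
      intro l
      have h : φ l = l • φ 1 := by rw [← map_smul, smul_eq_mul, mul_one]
      rw [h]; rfl
    have hsurj : ∀ x₁ x₂, g₁ x₁ * u = g₂ x₂ →
        ∃ l₁ l₂, g₁ l₁ = g₂ l₂ ∧ l₁ * a₁ = x₁ ∧ l₂ * a₂ = x₂ := by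
      intro x₁ x₂ hx
      obtain ⟨l, hl⟩ := φ.surjective ⟨(x₁, x₂), hx⟩
      have h := congrArg Subtype.val hl
      rw [hφ] at h
      exact ⟨l.val.1, l.val.2, l.2, congrArg Prod.fst h, congrArg Prod.snd h⟩
    have hinj : ∀ s t, g₁ s = g₂ t → s * a₁ = 0 → t * a₂ = 0 → s = 0 ∧ t = 0 := by
      intro s t hst hs ht
      have h0 : φ ⟨(s, t), hst⟩ = φ 0 := by
        rw [map_zero]
        apply Subtype.ext
        rw [hφ]
        show ((s * a₁, t * a₂) : Λ₁ × Λ₂) = 0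
        rw [hs, ht]; rfl
      have h1 := congrArg Subtype.val (φ.injective h0)
      exact ⟨congrArg Prod.fst h1, congrArg Prod.snd h1⟩
    obtain ⟨x₂, hx₂⟩ := hg₂ (u : L)
    obtain ⟨l₁, l₂, hl, hl₁, hl₂⟩ := hsurj 1 x₂ (by simp [hx₂])
    obtain ⟨y₁, hy₁⟩ := hg₁ ((u⁻¹ : Lˣ) : L)
    obtain ⟨m₁, m₂, hm, hm₁, hm₂⟩ := hsurj y₁ 1 (by simp [hy₁])
    set α : L := g₁ a₁ with hα
    set β : L := g₁ l₁ with hβ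
    set μ : L := g₁ m₁ with hμ
    have hβα : β * α = 1 := by rw [hβ, hα, ← map_mul, hl₁, map_one]
    have hμα : μ * α = ((u⁻¹ : Lˣ) : L) := by rw [hμ, hα, ← map_mul, hm₁, hy₁]
    -- Step A : a₂ * m₂ = 1
    have ham : a₂ * m₂ = 1 := by
      obtain ⟨s', hs'⟩ := hg₁ (1 - α * ↑u * μ)
      have hta : (1 - a₂ * m₂) * a₂ = 0 := by
        rw [sub_mul, one_mul, mul_assoc, hm₂, mul_one, sub_self]
      have hsa : (s' * (1 - a₁ * l₁)) * a₁ = 0 := by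
        rw [mul_assoc, sub_mul, one_mul, mul_assoc, hl₁, mul_one, sub_self, mul_zero]
      have hgt : g₂ (1 - a₂ * m₂) = 1 - α * ↑u * μ := by
        rw [map_sub, map_one, map_mul, ← he, ← hm]
      have hgs : g₁ (s' * (1 - a₁ * l₁)) = 1 - α * ↑u * μ := by
        rw [map_mul, hs', map_sub, map_one, map_mul]
        rw [show g₁ a₁ = α from rfl, show g₁ l₁ = β from rfl]
        have expand : (1 - α * ↑u * μ) * (1 - α * β)
            = 1 - α * β - α * ↑u * μ + α * ↑u * (μ * α) * β := by noncomm_ring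
        rw [expand, hμα, mul_assoc α (↑u) (↑u⁻¹ : L)]
        rw [Units.mul_inv, mul_one]
        abel
      have := hinj _ _ (hgs.trans hgt.symm) hsa hta
      have ht0 : (1 : Λ₂) - a₂ * m₂ = 0 := this.2
      rw [sub_eq_zero] at ht0
      exact ht0.symm
    -- Step B : a₁ * l₁ = 1
    have hαr : α * (↑u * μ) = 1 := by
      have : g₂ (a₂ * m₂) = 1 := by rw [ham, map_one]
      rw [map_mul, ← he, ← hm] at this
      rw [← mul_assoc]; exact this
    have hαβ : α * β = 1 := by
      have hβ' : β = ↑u * μ := by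
        calc β = β * (α * (↑u * μ)) := by rw [hαr, mul_one]
        _ = (β * α) * (↑u * μ) := by rw [mul_assoc]
        _ = ↑u * μ := by rw [hβα, one_mul]
      rw [hβ']; exact hαr
    have hal : a₁ * l₁ = 1 := by
      have hgt' : g₁ ((1 : Λ₁) - a₁ * l₁) = g₂ (0 : Λ₂) := by
        rw [map_sub, map_one, map_mul]
        rw [show g₁ a₁ = α from rfl, show g₁ l₁ = β from rfl, hαβ, sub_self, map_zero]
      have hta' : ((1 : Λ₁) - a₁ * l₁) * a₁ = 0 := by
        rw [sub_mul, one_mul, mul_assoc, hl₁, mul_one, sub_self]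
      have := hinj _ _ hgt' hta' (by rw [zero_mul])
      have ht0 : (1 : Λ₁) - a₁ * l₁ = 0 := this.1
      rw [sub_eq_zero] at ht0
      exact ht0.symm
    refine ⟨⟨l₁, a₁, hl₁, hal⟩, ⟨a₂, m₂, ham, hm₂⟩, ?_⟩
    show g₁ l₁ * g₂ a₂ = (u : L)
    rw [← he, ← mul_assoc, hβα, one_mul]
  · rintro ⟨w₁, w₂, hw⟩
    have hmemM : ∀ l : Λ₁ × Λ₂, l ∈ fibreProduct g₁ g₂ →
        (l.1 * ↑w₁⁻¹, l.2 * ↑w₂) ∈ pullbackLattice g₁ g₂ u := by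
      intro l hl
      show g₁ (l.1 * ↑w₁⁻¹) * u = g₂ (l.2 * ↑w₂)
      have h1 : g₁ (↑w₁⁻¹ : Λ₁) * ↑u = g₂ ↑w₂ := by
        rw [← hw, ← mul_assoc, ← map_mul, Units.inv_mul, map_one, one_mul]
      have hl' : g₁ l.1 = g₂ l.2 := hl
      rw [map_mul, map_mul, mul_assoc, h1, hl']
    have hmemΛ : ∀ m : Λ₁ × Λ₂, m ∈ pullbackLattice g₁ g₂ u →
        (m.1 * ↑w₁, m.2 * ↑w₂⁻¹) ∈ fibreProduct g₁ g₂ := by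
      intro m hm
      show g₁ (m.1 * ↑w₁) = g₂ (m.2 * ↑w₂⁻¹)
      have hm' : g₁ m.1 * ↑u = g₂ m.2 := hm
      have h2 : g₁ (w₁ : Λ₁) = ↑u * g₂ ↑w₂⁻¹ := by
        rw [← hw, mul_assoc, ← map_mul, Units.mul_inv, map_one, mul_one]
      rw [map_mul, map_mul, h2, ← mul_assoc, hm']
    refine ⟨{ toFun := fun l => ⟨(l.val.1 * ↑w₁⁻¹, l.val.2 * ↑w₂), hmemM l.val l.2⟩
              map_add' := ?_
              map_smul' := ?_
              invFun := fun m => ⟨(m.val.1 * ↑w₁, m.val.2 * ↑w₂⁻¹), hmemΛ m.val m.2⟩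
              left_inv := ?_
              right_inv := ?_ }⟩
    · intro x y
      apply Subtype.ext
      show ((((x : Λ₁ × Λ₂) + y).1 * ↑w₁⁻¹, ((x : Λ₁ × Λ₂) + y).2 * ↑w₂) : Λ₁ × Λ₂) = _
      ext <;> simp [add_mul]
    · intro c x
      apply Subtype.ext
      show ((c.val.1 * (x : Λ₁ × Λ₂).1 * ↑w₁⁻¹, c.val.2 * (x : Λ₁ × Λ₂).2 * ↑w₂) : Λ₁ × Λ₂)
          = (c.val.1 * ((x : Λ₁ × Λ₂).1 * ↑w₁⁻¹), c.val.2 * ((x : Λ₁ × Λ₂).2 * ↑w₂))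
      ext <;> simp [mul_assoc]
    · intro x
      apply Subtype.ext
      show (((x : Λ₁ × Λ₂).1 * ↑w₁⁻¹ * ↑w₁, (x : Λ₁ × Λ₂).2 * ↑w₂ * ↑w₂⁻¹) : Λ₁ × Λ₂) = x
      ext <;> simp [mul_assoc]
    · intro x
      apply Subtype.ext
      show (((x : Λ₁ × Λ₂).1 * ↑w₁ * ↑w₁⁻¹, (x : Λ₁ × Λ₂).2 * ↑w₂⁻¹ * ↑w₂) : Λ₁ × Λ₂) = x
      ext <;> simp [mul_assoc]
end

section
/- Let $\Lambda_1, \Lambda_2, \overline{\Lambda}$ be rings with surjective ring homomorphisms $g_i : \Lambda_i \to \overline{\Lambda}$ ($i = 1, 2$), let $\Lambda$ be the fibre product $\{(x_1, x_2) \in \Lambda_1 \oplus \Lambda_2 \mid g_1(x_1) = g_2(x_2)\}$, and for $u \in \overline{\Lambda}^\times$ let $M(u) = \{(x_1, x_2) \in \Lambda_1 \oplus \Lambda_2 \mid g_1(x_1)u = g_2(x_2)\}$. Then for $u, u' \in \overline{\Lambda}^\times$ there is an isomorphism of left $\Lambda$-modules $M(u) \oplus M(u') \cong \Lambda \oplus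 M(uu')$. -/
variable {Λ₁ Λ₂ L : Type*} [Ring Λ₁] [Ring Λ₂] [Ring L]

set_option synthInstance.maxHeartbeats 1000000 in
set_option maxHeartbeats 2000000 in
/-- (Reiner–Ullom) With `g₁, g₂` surjective ring homomorphisms onto
`L̄`, `Λ` the fibre product, and `M(u)` the pullback lattice of a unit `u ∈ L̄ˣ`, one
has an isomorphism of left `Λ`-modules `M(u) ⊕ M(u') ≅ Λ ⊕ M(u·u')`. -/
theorem pullbackLattice_prod_iso
    (g₁ : Λ₁ →+* L) (g₂ : Λ₂ →+* L)
    (hg₁ : Function.Surjective g₁) (hg₂ : Function.Surjective g₂) (u u' : Lˣ) :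
    Nonempty
      ((↥(pullbackLattice g₁ g₂ u) × ↥(pullbackLattice g₁ g₂ u'))
        ≃ₗ[↥(fibreProduct g₁ g₂)]
       (↥(fibreProduct g₁ g₂) × ↥(pullbackLattice g₁ g₂ (u * u')))) := by
  obtain ⟨a, ha⟩ := hg₁ (u : L)
  obtain ⟨b, hb⟩ := hg₁ ((u⁻¹ : Lˣ) : L)
  -- images of the matrix entries
  have hα : g₁ (2*a - a*b*a) = (u : L) := by
    simp [ha, hb, map_sub, map_mul, two_mul]
  have hβ : g₁ (a*b - 1) = 0 := by
    simp [ha, hb, map_sub, map_mul, ← Units.val_mul]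
  have hγ : g₁ (1 - b*a) = 0 := by
    simp [ha, hb, map_sub, map_mul, ← Units.val_mul]
  refine ⟨{
    toFun := fun p =>
      (⟨(p.1.1.1 * (2*a - a*b*a) + p.2.1.1 * (1 - b*a), p.1.1.2), by
          have hx : g₁ p.1.1.1 * u = g₂ p.1.1.2 := p.1.2
          show g₁ (p.1.1.1 * (2*a - a*b*a) + p.2.1.1 * (1 - b*a)) = g₂ p.1.1.2
          rw [map_add, map_mul, map_mul, hα, hγ, mul_zero, add_zero, hx]⟩,
       ⟨(p.1.1.1 * (a*b - 1) + p.2.1.1 * b, p.2.1.2), by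
          have hy : g₁ p.2.1.1 * u' = g₂ p.2.1.2 := p.2.2
          show g₁ _ * ((u * u' : Lˣ) : L) = g₂ _
          rw [map_add, map_mul, map_mul, hβ, hb, mul_zero, zero_add,
            Units.val_mul, ← mul_assoc, mul_assoc (g₁ p.2.1.1), Units.inv_mul,
            mul_one, hy]⟩),
    invFun := fun q =>
      (⟨(q.1.1.1 * b + q.2.1.1 * (a*b - 1), q.1.1.2), by
          have hz : g₁ q.1.1.1 = g₂ q.1.1.2 := q.1.2
          show g₁ _ * (u : L) = g₂ _
          rw [map_add, map_mul, map_mul, hβ, hb, mul_zero, add_zero,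
            mul_assoc, Units.inv_mul, mul_one, hz]⟩,
       ⟨(q.1.1.1 * (1 - b*a) + q.2.1.1 * (2*a - a*b*a), q.2.1.2), by
          have hw : g₁ q.2.1.1 * ((u * u' : Lˣ) : L) = g₂ q.2.1.2 := q.2.2
          show g₁ _ * (u' : L) = g₂ _
          rw [map_add, map_mul, map_mul, hα, hγ, mul_zero, zero_add,
            mul_assoc, ← Units.val_mul, hw]⟩),
    map_add' := by
      rintro ⟨⟨⟨x₁, x₂⟩, hx⟩, ⟨⟨y₁, y₂⟩, hy⟩⟩ ⟨⟨⟨x₁', x₂'⟩, hx'⟩, ⟨⟨y₁', y₂'⟩, hy'⟩⟩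
      refine Prod.ext (Subtype.ext (Prod.ext ?_ ?_)) (Subtype.ext (Prod.ext ?_ ?_)) <;>
        simp <;> noncomm_ring
    map_smul' := by
      rintro ⟨⟨l₁, l₂⟩, hl⟩ ⟨⟨⟨x₁, x₂⟩, hx⟩, ⟨⟨y₁, y₂⟩, hy⟩⟩
      refine Prod.ext (Subtype.ext (Prod.ext ?_ ?_)) (Subtype.ext (Prod.ext ?_ ?_)) <;>
        simp [Subring.smul_def, Prod.mul_def] <;> noncomm_ring
    left_inv := by
      rintro ⟨⟨⟨x₁, x₂⟩, hx⟩, ⟨⟨y₁, y₂⟩, hy⟩⟩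
      refine Prod.ext (Subtype.ext (Prod.ext ?_ ?_)) (Subtype.ext (Prod.ext ?_ ?_)) <;>
        simp <;> noncomm_ring
    right_inv := by
      rintro ⟨⟨⟨z₁, z₂⟩, hz⟩, ⟨⟨w₁, w₂⟩, hw⟩⟩
      refine Prod.ext (Subtype.ext (Prod.ext ?_ ?_)) (Subtype.ext (Prod.ext ?_ ?_)) <;>
        simp <;> noncomm_ring }⟩
end
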